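/- arXiv:2107.05152 — 15 statements merged into one kernel-verified Lean document; each statement's English description precedes it below -/
import Mathlib

section
/- Let R be an arithmetical ring, i.e. a commutative ring whose lattice of ideals is distributive. Then for all a, b ∈ R there exist α, r, s ∈ R such that a·α = b·r and b·(α − 1) = a·s. -/
/-! Since `b = a + (b - a)`, distributivity gives
`(b) = (b) ⊓ ((a) + (b - a)) = ((b) ⊓ (a)) + ((b) ⊓ (b - a))`, so `b = a v + (b - a) t` with
`a v` and `(b - a) t` both multiples of `b`. Then `α = t` works: `a t` and `b (t - 1)` are
`b t - (b - a) t` and `a t - a v`. -/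

namespace Ideal

variable {R : Type*} [CommRing R]

theorem mem_span_singleton_sup_span_singleton_sub (a b : R) :
    b ∈ span {a} ⊔ span {b - a} := by
  simpa using add_mem (mem_sup_left (mem_span_singleton_self a))
    (mem_sup_right (mem_span_singleton_self (b - a)))

theorem exists_add_eq_of_inf_sup_distrib
    (hdist : ∀ I J K : Ideal R, I ⊓ (J ⊔ K) = (I ⊓ J) ⊔ (I ⊓ K)) (a b : R) :
    ∃ x ∈ span {b} ⊓ span {a}, ∃ y ∈ span {b} ⊓ span {b - a}, x + y = b := by
  have hb : b ∈ span {b} ⊓ (span {a} ⊔ span {b - a}) :=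
    ⟨mem_span_singleton_self b, mem_span_singleton_sup_span_singleton_sub a b⟩
  rw [hdist] at hb
  exact Submodule.mem_sup.mp hb

end Ideal

/-- Over an arithmetical ring (a commutative ring whose lattice of ideals is
distributive), for all `a b` there exist `α r s` with `a * α = b * r` and
`b * (α - 1) = a * s`. -/
theorem stmt0 (R : Type*) [CommRing R]
    (hdist : ∀ I J K : Ideal R, I ⊓ (J ⊔ K) = (I ⊓ J) ⊔ (I ⊓ K)) :
    ∀ a b : R, ∃ α r s : R, a * α = b * r ∧ b * (α - 1) = a * s := by
  intro a b
  obtain ⟨x, ⟨-, hxa⟩, y, ⟨hyb, hyba⟩, hxy⟩ := Ideal.exists_add_eq_of_inf_sup_distrib hdist a b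
  obtain ⟨v, rfl⟩ := Ideal.mem_span_singleton.mp hxa
  obtain ⟨w, hw⟩ := Ideal.mem_span_singleton.mp hyb
  obtain ⟨t, ht⟩ := Ideal.mem_span_singleton.mp hyba
  exact ⟨t, t - w, t - v, by linear_combination ht - hw, by linear_combination hxy - ht⟩
end

section
/- Let V be a valuation domain, U a uniserial V-module, and N a submodule of U such that the quotient module U/N is finite and nontrivial. Then U is cyclic; in particular there is an ideal I of V such that U is isomorphic as a V-module to V/I. -/
/-!
The submodules of `U` containing `N` correspond to the submodules of the finite nontrivial
module `U ⧸ N`, so one of them is maximal among the proper ones. In a uniserial module such a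
maximal proper submodule `M` lies below the span of any `u ∉ M`, which is therefore all of `U`.
-/

namespace Submodule

variable {R M : Type*}

theorem exists_isCoatom_of_finite_quotient [Ring R] [AddCommGroup M] [Module R M]
    (N : Submodule R M) [Finite (M ⧸ N)] [Nontrivial (M ⧸ N)] :
    ∃ P : Submodule R M, IsCoatom P := by
  have : Module.Finite R (M ⧸ N) := .of_finite
  obtain ⟨P, hP⟩ := IsCoatomic.exists_coatom (Submodule R (M ⧸ N))
  exact ⟨P.comap N.mkQ, (isCoatom_comap_iff N.mkQ_surjective).mpr hP⟩

theorem span_singleton_eq_top_of_notMem_of_isCoatom [Ring R] [AddCommGroup M] [Module R M]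
    (huni : ∀ N₁ N₂ : Submodule R M, N₁ ≤ N₂ ∨ N₂ ≤ N₁) {P : Submodule R M} (hP : IsCoatom P)
    {u : M} (hu : u ∉ P) : span R {u} = ⊤ := by
  have hnle : ¬ span R {u} ≤ P := fun h => hu (h (mem_span_singleton_self u))
  exact hP.2 _ (lt_of_le_not_ge ((huni _ _).resolve_left hnle) hnle)

theorem exists_span_singleton_eq_top_of_isCoatom [Ring R] [AddCommGroup M] [Module R M]
    (huni : ∀ N₁ N₂ : Submodule R M, N₁ ≤ N₂ ∨ N₂ ≤ N₁) {P : Submodule R M} (hP : IsCoatom P) :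
    ∃ u : M, span R {u} = ⊤ := by
  obtain ⟨u, hu⟩ := (SetLike.lt_iff_le_and_exists.mp hP.lt_top).2
  exact ⟨u, span_singleton_eq_top_of_notMem_of_isCoatom huni hP hu.2⟩

theorem exists_linearEquiv_quotient_of_span_singleton_eq_top [CommRing R] [AddCommGroup M]
    [Module R M] {u : M} (hu : span R {u} = ⊤) : ∃ I : Ideal R, Nonempty (M ≃ₗ[R] R ⧸ I) := by
  let f := LinearMap.toSpanSingleton R M u
  have hf : Function.Surjective f := by
    rw [← LinearMap.range_eq_top, ← LinearMap.span_singleton_eq_range, hu]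
  exact ⟨LinearMap.ker f, ⟨(f.quotKerEquivOfSurjective hf).symm⟩⟩

end Submodule

theorem stmt1_general (V : Type*) [CommRing V]
    (U : Type*) [AddCommGroup U] [Module V U]
    (huni : ∀ N₁ N₂ : Submodule V U, N₁ ≤ N₂ ∨ N₂ ≤ N₁)
    (N : Submodule V U) (hfin : Finite (U ⧸ N)) (hnt : Nontrivial (U ⧸ N)) :
    (∃ u : U, Submodule.span V {u} = ⊤) ∧
      ∃ I : Ideal V, Nonempty (U ≃ₗ[V] V ⧸ I) := by
  obtain ⟨P, hP⟩ := N.exists_isCoatom_of_finite_quotient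
  obtain ⟨u, hu⟩ := Submodule.exists_span_singleton_eq_top_of_isCoatom huni hP
  exact ⟨⟨u, hu⟩, Submodule.exists_linearEquiv_quotient_of_span_singleton_eq_top hu⟩

/-- If `U` is a uniserial module over a valuation domain `V` and `N` is a submodule
with `U/N` finite and nontrivial, then `U` is cyclic; in particular `U ≅ V/I`
for some ideal `I` of `V`. -/
theorem stmt1 (V : Type*) [CommRing V] [IsDomain V] [ValuationRing V]
    (U : Type*) [AddCommGroup U] [Module V U]
    (huni : ∀ N₁ N₂ : Submodule V U, N₁ ≤ N₂ ∨ N₂ ≤ N₁)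
    (N : Submodule V U) (hfin : Finite (U ⧸ N)) (hnt : Nontrivial (U ⧸ N)) :
    (∃ u : U, Submodule.span V {u} = ⊤) ∧
      ∃ I : Ideal V, Nonempty (U ≃ₗ[V] V ⧸ I) :=
  stmt1_general V U huni N hfin hnt
end

section
/- Let V be a valuation domain, I a proper ideal of V and a ∈ V with a ≠ 0. Then (aI)^# = I^#; that is, for every r ∈ V, there exists x ∉ aI with r·x ∈ aI if and only if there exists x ∉ I with r·x ∈ I. Here aI denotes the product of the principal ideal (a) with I, i.e. the ideal {a·y : y ∈ I}. -/
/-! If `x ∉ aI` but `r x ∈ aI`, compare `a` and `x` by divisibility. When `x = a c`, cancelling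
`a` shows that `c` witnesses `r ∈ I^#`. When `x ∣ a`, we get `r x ∈ aI ⊆ xI`, so `r ∈ I` and
`r ∈ I^#` because `I` is proper. Conversely, `x` witnesses `r ∈ I^#` iff `a x` witnesses
`r ∈ (aI)^#`. -/

namespace Ideal

variable {R : Type*}

/-- `I^# = ⋃_{x ∉ I} (I : x)`. -/
def sharp [CommSemiring R] (I : Ideal R) : Set R :=
  {r | ∃ x ∉ I, r * x ∈ I}

theorem subset_sharp [CommSemiring R] {I : Ideal R} (hI : I ≠ ⊤) : (I : Set R) ⊆ I.sharp :=
  fun r hr => ⟨1, (ne_top_iff_one I).mp hI, by rwa [mul_one]⟩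

theorem mul_mem_span_singleton_mul_iff [CommSemiring R] [IsDomain R] {a z : R} {I : Ideal R}
    (ha : a ≠ 0) : a * z ∈ span {a} * I ↔ z ∈ I := by
  simp only [mem_span_singleton_mul, mul_right_inj' ha, exists_eq_right]

theorem sharp_subset_sharp_span_singleton_mul [CommSemiring R] [IsDomain R] {a : R}
    {I : Ideal R} (ha : a ≠ 0) : I.sharp ⊆ (span {a} * I).sharp := by
  rintro r ⟨x, hx, hrx⟩
  refine ⟨a * x, (mul_mem_span_singleton_mul_iff ha).not.mpr hx, ?_⟩
  rwa [mul_left_comm, mul_mem_span_singleton_mul_iff ha]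

theorem sharp_span_singleton_mul_subset_sharp [CommRing R] [IsDomain R] [PreValuationRing R]
    {a : R} {I : Ideal R} (hI : I ≠ ⊤) (ha : a ≠ 0) : (span {a} * I).sharp ⊆ I.sharp := by
  rintro r ⟨x, hx, hrx⟩
  obtain ⟨c, rfl⟩ | hxa := ValuationRing.dvd_total a x
  · refine ⟨c, (mul_mem_span_singleton_mul_iff ha).not.mp hx, ?_⟩
    rwa [mul_left_comm, mul_mem_span_singleton_mul_iff ha] at hrx
  · have hx0 : x ≠ 0 := by rintro rfl; exact hx (zero_mem _)
    have hle : span {a} * I ≤ span {x} * I :=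
      mul_mono_left ((span_singleton_le_span_singleton).mpr hxa)
    have hrI : r ∈ I := by
      rw [← mul_mem_span_singleton_mul_iff hx0, mul_comm x r]
      exact hle hrx
    exact subset_sharp hI hrI

theorem sharp_span_singleton_mul [CommRing R] [IsDomain R] [PreValuationRing R] {a : R}
    {I : Ideal R} (hI : I ≠ ⊤) (ha : a ≠ 0) : (span {a} * I).sharp = I.sharp :=
  (sharp_span_singleton_mul_subset_sharp hI ha).antisymm (sharp_subset_sharp_span_singleton_mul ha)

end Ideal

/-- For a proper ideal `I` of a valuation domain `V` and a nonzero `a`,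
`(aI)^# = I^#`. -/
theorem stmt3 (V : Type*) [CommRing V] [IsDomain V] [ValuationRing V]
    (I : Ideal V) (hI : I ≠ ⊤) (a : V) (ha : a ≠ 0) :
    ∀ r : V,
      (∃ x : V, x ∉ Ideal.span {a} * I ∧ r * x ∈ Ideal.span {a} * I) ↔
      (∃ x : V, x ∉ I ∧ r * x ∈ I) :=
  Set.ext_iff.mp (Ideal.sharp_span_singleton_mul hI ha)
end

section
/- Let V be a valuation domain and I a proper ideal of V such that the quotient V/I is finite. Then I^# is the unique maximal ideal of V; that is, for every r ∈ V, there exists a ∉ I with r·a ∈ I if and only if r is not a unit of V. -/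
/-!
Since `V/I` is finite, the powers of a nonunit `r` are eventually periodic modulo `I`:
`r^m * (1 - r^j) ∈ I` with `j > 0`. As `V` is local, `1 - r^j` is a unit, so `r^m ∈ I`;
for the least such `m` (positive, as `I` is proper) `a = r^(m-1)` lies outside `I` with `r a ∈ I`.
-/

theorem exists_pow_add_eq_pow_of_finite {M : Type*} [Monoid M] [Finite M] (x : M) :
    ∃ m j : ℕ, 0 < j ∧ x ^ (m + j) = x ^ m := by
  obtain ⟨m, n, hmn, heq⟩ := Finite.exists_ne_map_eq_of_infinite fun k : ℕ => x ^ k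
  rcases Nat.lt_or_gt_of_ne hmn with hlt | hlt
  · exact ⟨m, n - m, by omega, by rw [Nat.add_sub_cancel' hlt.le, heq]⟩
  · exact ⟨n, m - n, by omega, by rw [Nat.add_sub_cancel' hlt.le, heq]⟩

namespace Ideal

variable {R : Type*} [CommRing R] {I : Ideal R} {r : R}

theorem exists_pow_mem_of_not_isUnit [IsLocalRing R] [Finite (R ⧸ I)] (hr : ¬IsUnit r) :
    ∃ m : ℕ, r ^ m ∈ I := by
  obtain ⟨m, j, hj, heq⟩ := exists_pow_add_eq_pow_of_finite (Quotient.mk I r)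
  have hmem : r ^ m * (1 - r ^ j) ∈ I := by
    rw [← map_pow, ← map_pow, Quotient.eq] at heq
    rw [mul_sub, mul_one, ← pow_add]
    exact I.neg_mem_iff.mp (by simpa only [neg_sub] using heq)
  have hunit : IsUnit (1 - r ^ j) :=
    IsLocalRing.isUnit_one_sub_self_of_mem_nonunits _ fun h => hr ((isUnit_pow_iff hj.ne').mp h)
  exact ⟨m, (I.mul_unit_mem_iff_mem hunit).mp hmem⟩

theorem exists_notMem_mul_mem_of_pow_mem (hI : I ≠ ⊤) {m : ℕ} (hm : r ^ m ∈ I) :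
    ∃ a ∉ I, r * a ∈ I := by
  induction m with
  | zero => exact absurd ((eq_top_iff_one I).mpr (by simpa using hm)) hI
  | succ m ih =>
    by_cases h : r ^ m ∈ I
    · exact ih h
    · exact ⟨r ^ m, h, by rwa [← pow_succ']⟩

end Ideal

/-- If `I` is a proper ideal of a valuation domain `V` with `V/I` finite, then
`I^#` is the unique maximal ideal of `V`, i.e. `r ∈ I^#` iff `r` is not a unit. -/
theorem stmt4 (V : Type*) [CommRing V] [IsDomain V] [ValuationRing V]
    (I : Ideal V) (hI : I ≠ ⊤) (hfin : Finite (V ⧸ I)) :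
    ∀ r : V, (∃ a : V, a ∉ I ∧ r * a ∈ I) ↔ ¬ IsUnit r := by
  intro r
  constructor
  · rintro ⟨a, ha, hra⟩ hr
    exact ha ((I.unit_mul_mem_iff_mem hr).mp hra)
  · intro hr
    obtain ⟨m, hm⟩ := Ideal.exists_pow_mem_of_not_isUnit (I := I) hr
    exact Ideal.exists_notMem_mul_mem_of_pow_mem hI hm
end

section
/- Let V be a commutative integral domain, b ∈ V nonzero, and I an ideal of V such that the quotient V/I is finite. Then the cardinality of I/bI equals the cardinality of V/bV, where bI denotes the submodule {b·y : y ∈ I} of I and bV the principal ideal generated by b. -/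
/-!
Put `T = bI` and count `|V/T|` through the two chains `T ≤ I ≤ V` and `T ≤ bV ≤ V`:
`|V/T| = |V/I| · |I/T| = |V/bV| · |bV/T|`. Since `V` is a domain, multiplication by `b` is an
isomorphism `V ≅ bV` carrying `I` onto `T`, so `|bV/T| = |V/I|`, and the finite nonzero
factor `|V/I|` cancels.
-/

open Cardinal

namespace Submodule

variable {R M : Type*} [Ring R] [AddCommGroup M] [Module R M]

theorem cardinalMk_eq_cardinalMk_quotient_mul (S : Submodule R M) :
    #M = #(M ⧸ S) * #S := by
  rw [mk_congr (AddSubgroup.addGroupEquivQuotientProdAddSubgroup (s := S.toAddSubgroup)), mk_prod,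
    lift_id, lift_id]
  rfl

noncomputable def quotientComapSubtypeEquivMapMkQ (N P : Submodule R M) :
    (P ⧸ N.comap P.subtype) ≃ₗ[R] P.map N.mkQ :=
  quotEquivOfEq _ _ (by rw [LinearMap.ker_comp, ker_mkQ]) ≪≫ₗ
    (N.mkQ ∘ₗ P.subtype).quotKerEquivRange ≪≫ₗ
    LinearEquiv.ofEq _ _ (by rw [LinearMap.range_comp, range_subtype])

theorem cardinalMk_quotient_eq_mul_of_le {N P : Submodule R M} (h : N ≤ P) :
    #(M ⧸ N) = #(M ⧸ P) * #(P ⧸ N.comap P.subtype) := by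
  rw [cardinalMk_eq_cardinalMk_quotient_mul (P.map N.mkQ),
    mk_congr (quotientQuotientEquivQuotient N P h).toEquiv,
    mk_congr (quotientComapSubtypeEquivMapMkQ N P).toEquiv]

end Submodule

namespace Ideal

variable {V : Type*} [CommRing V] [IsDomain V]

noncomputable def quotientEquivSpanSingletonQuotientMul {b : V} (hb : b ≠ 0) (I : Ideal V) :
    (V ⧸ I) ≃ₗ[V]
      (↥(span {b} : Ideal V) ⧸ Submodule.comap (span {b} : Ideal V).subtype (span {b} * I)) :=
  Submodule.Quotient.equiv I _ (LinearEquiv.toSpanNonzeroSingleton V V b hb) <| by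
    ext ⟨y, hy⟩
    simp only [Submodule.mem_map, Submodule.mem_comap, Submodule.subtype_apply,
      mem_span_singleton_mul, LinearEquiv.coe_coe, LinearEquiv.toSpanNonzeroSingleton_apply,
      Subtype.ext_iff, smul_eq_mul, mul_comm b]

end Ideal

/-- If `V` is an integral domain, `b ≠ 0` and `I` is an ideal with `V/I` finite,
then `|I/bI| = |V/bV|`. -/
theorem stmt5 (V : Type*) [CommRing V] [IsDomain V] (b : V) (hb : b ≠ 0)
    (I : Ideal V) (hfin : Finite (V ⧸ I)) :
    Cardinal.mk (↥I ⧸ Submodule.comap I.subtype (Ideal.span {b} * I)) =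
      Cardinal.mk (V ⧸ Ideal.span {b}) := by
  have via_I := Submodule.cardinalMk_quotient_eq_mul_of_le
    (Ideal.mul_le_right (I := Ideal.span {b}) (J := I))
  have via_span := Submodule.cardinalMk_quotient_eq_mul_of_le
    (Ideal.mul_le_left (I := Ideal.span {b}) (J := I))
  rw [via_I, ← mk_congr (Ideal.quotientEquivSpanSingletonQuotientMul hb I).toEquiv,
    ← Nat.cast_card (α := V ⧸ I), mul_comm] at via_span
  exact (mul_natCast_inj Finite.card_pos.ne').mp via_span
end

section
/- Let V be a valuation domain, I and J ideals of V, and a ∈ V with a ≠ 0. Then (I : a) ⊆ J if and only if I ⊆ aJ or J = V, where aJ denotes the product of the principal ideal (a) with J. -/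
/-!
If `I ⊆ aJ` then `ra ∈ I` gives `ra = aj` with `j ∈ J`, and `r = j` by cancelling the
non-zero-divisor `a`. Conversely, for `x ∈ I` compare `x` with `a`: if `a ∣ x`, say `x = ac`,
then `ca ∈ I`, so `c ∈ J` and `x ∈ aJ`; if `x ∣ a`, then `1 · a ∈ I`, so `1 ∈ J`.
-/

namespace Ideal

variable {R : Type*} [CommRing R]

theorem mem_of_mul_mem_span_singleton_mul {a r : R} (ha : IsLeftRegular a) {J : Ideal R}
    (h : r * a ∈ span {a} * J) : r ∈ J := by
  obtain ⟨j, hj, hja⟩ := mem_span_singleton_mul.mp h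
  have hjr : j = r := ha (hja.trans (mul_comm r a))
  exact hjr ▸ hj

theorem le_span_singleton_mul_of_mul_mem_imp_mem [PreValuationRing R] {I J : Ideal R} {a : R}
    (hJ : J ≠ ⊤) (h : ∀ r : R, r * a ∈ I → r ∈ J) : I ≤ span {a} * J := by
  intro x hx
  obtain ⟨c, hac | hxc⟩ := PreValuationRing.cond a x
  · have hc : c ∈ J := h c (by rwa [mul_comm, hac])
    exact mem_span_singleton_mul.mpr ⟨c, hc, hac⟩
  · have h1 : (1 : R) ∈ J := h 1 (by rw [one_mul, ← hxc]; exact I.mul_mem_right c hx)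
    exact absurd ((eq_top_iff_one J).mpr h1) hJ

end Ideal

/-- For ideals `I, J` of a valuation domain `V` and `a ≠ 0`:
`(I : a) ⊆ J` iff `I ⊆ aJ` or `J = V`. -/
theorem stmt6 (V : Type*) [CommRing V] [IsDomain V] [ValuationRing V]
    (I J : Ideal V) (a : V) (ha : a ≠ 0) :
    (∀ r : V, r * a ∈ I → r ∈ J) ↔ (I ≤ Ideal.span {a} * J ∨ J = ⊤) := by
  refine ⟨fun h => ?_, ?_⟩
  · by_cases hJ : J = ⊤
    · exact Or.inr hJ
    · exact Or.inl (Ideal.le_span_singleton_mul_of_mul_mem_imp_mem hJ h)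
  · rintro (hIJ | rfl) r hr
    · exact Ideal.mem_of_mul_mem_span_singleton_mul
        (IsLeftCancelMulZero.mul_left_cancel_of_ne_zero ha) (hIJ hr)
    · trivial
end

section
/- Let R be a commutative ring, a ∈ R and B an ideal of R. Then in the prime spectrum Spec R with the Zariski topology, V((rad(B) : a)) equals the topological closure of V(B) \ V(aR), where V(I) denotes the Zariski-closed set of prime ideals containing the ideal I and aR is the principal ideal generated by a. -/
open PrimeSpectrum

theorem Ideal.radical_colon_eq_vanishingIdeal {R : Type*} [CommRing R] (B J : Ideal R) :
    B.radical.colon J = vanishingIdeal (zeroLocus B \ zeroLocus J) := by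
  ext x
  simp only [Submodule.mem_colon, mem_vanishingIdeal, Set.mem_sdiff, mem_zeroLocus,
    SetLike.coe_subset_coe, SetLike.mem_coe, smul_eq_mul]
  constructor
  · rintro h p ⟨hBp, hJp⟩
    obtain ⟨j, hjJ, hjp⟩ := Set.not_subset.mp hJp
    have hxj : x * j ∈ p.asIdeal := p.2.radical_le_iff.mpr hBp (h j hjJ)
    exact (p.2.mem_or_mem hxj).resolve_right hjp
  · intro h j hjJ
    rw [Ideal.radical_eq_sInf, Submodule.mem_sInf]
    rintro p ⟨hBp, hp⟩
    by_cases hJp : J ≤ p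
    · exact Ideal.mul_mem_left p x (hJp hjJ)
    · exact Ideal.mul_mem_right j p (h ⟨p, hp⟩ ⟨hBp, hJp⟩)

/-- In `Spec R` with the Zariski topology, `V((rad B : a))` is the closure of
`V(B) \ V(aR)`. -/
theorem stmt8 (R : Type*) [CommRing R] (a : R) (B : Ideal R) :
    PrimeSpectrum.zeroLocus ((Submodule.colon B.radical (Ideal.span {a})) : Set R) =
      closure (PrimeSpectrum.zeroLocus (B : Set R) \
        PrimeSpectrum.zeroLocus ((Ideal.span {a} : Ideal R) : Set R)) := by
  rw [B.radical_colon_eq_vanishingIdeal, zeroLocus_vanishingIdeal_eq_closure]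
end

section
/- Let R be a commutative ring, n ≥ 2 a natural number, a, c ∈ R and b₁, …, bₙ, d₁, …, dₙ ∈ R. Suppose α, β, r₁, r₂, s₁, s₂ ∈ R satisfy b₁α = b₂r₂, b₂(α − 1) = b₁r₁, d₁β = d₂s₂ and d₂(β − 1) = d₁s₁. For elements x, y and tuples (e₁,…,e_k), (f₁,…,f_k), write (x, e₁,…,e_k, y, f₁,…,f_k) ∈ DPR_k(R) to mean: for all prime ideals 𝔭, 𝔮 of R with 𝔭 + 𝔮 ≠ R, either x ∈ 𝔭, or y ∈ 𝔮, or eᵢ ∉ 𝔭 for some i, or fᵢ ∉ 𝔮 for some i. Then (a, b₁,…,bₙ, c, d₁,…,dₙ) ∈ DPRₙ(R) if and only if all four of the following hold: (i) (aα, b₂,…,bₙ, cβ, d₂,…,dₙ) ∈ DPR_{n−1}(R); (ii) (aα, b₂,…,bₙ, c(β−1), d₁, d₃,…,dₙ) ∈ DPR_{n−1}(R); (iii) (a(α−1), b₁, b₃,…,bₙ, cβ, d₂,…,dₙ) ∈ DPR_{n−1}(R); (iv) (a(α−1), b₁, b₃,…,bₙ, c(β−1), d₁, d₃,…,dₙ)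 ∈ DPR_{n−1}(R). -/
/-!
Every prime ideal omits `α` or `α - 1`, since it cannot contain their difference `1`. Away from
`α`, the relation `b₁ α = b₂ r₂` makes `b₂ ∈ 𝔭` force `b₁ ∈ 𝔭`, so the entry `b₁` may be dropped
at the cost of replacing `a` by `a α`; away from `α - 1` the same holds with the roles of `b₁` and
`b₂` exchanged, and likewise for `d₁, d₂, β`. Each pair of primes `𝔭, 𝔮` is therefore tested by
one of the four reduced conditions, and each reduced condition is implied by the original one.
-/

/-- `(x, e, y, f) ∈ DPR(R)`: for all prime ideals `P, Q` with `P + Q ≠ R`,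
either `x ∈ P`, or `y ∈ Q`, or some entry of `e` is not in `P`, or some entry
of `f` is not in `Q`. -/
def DPR {R : Type*} [CommRing R] {ι κ : Type*} (x : R) (e : ι → R) (y : R)
    (f : κ → R) : Prop :=
  ∀ P Q : Ideal R, P.IsPrime → Q.IsPrime → P ⊔ Q ≠ ⊤ →
    x ∈ P ∨ y ∈ Q ∨ (∃ i, e i ∉ P) ∨ (∃ j, f j ∉ Q)

section

variable {R : Type*} [CommRing R] {ι κ : Type*}

theorem Ideal.IsPrime.notMem_or_sub_one_notMem {P : Ideal R} (hP : P.IsPrime) (α : R) :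
    α ∉ P ∨ α - 1 ∉ P := by
  by_contra! h
  exact hP.ne_top (P.eq_top_iff_one.mpr (by simpa using P.sub_mem h.1 h.2))

theorem Ideal.IsPrime.forall_mem_of_forall_ne_mem {P : Ideal R} (hP : P.IsPrime) {e : ι → R}
    {γ : R} {i j : ι} (hji : j ≠ i) (hdvd : e j ∣ e i * γ) (hγ : γ ∉ P)
    (he : ∀ t : {t // t ≠ i}, e t ∈ P) (t : ι) : e t ∈ P := by
  by_cases hti : t = i
  · subst hti
    exact (hP.mem_or_mem (P.mem_of_dvd hdvd (he ⟨j, hji⟩))).resolve_right hγ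
  · exact he ⟨t, hti⟩

theorem dpr_iff {x y : R} {e : ι → R} {f : κ → R} :
    DPR x e y f ↔ ∀ P Q : Ideal R, P.IsPrime → Q.IsPrime → P ⊔ Q ≠ ⊤ →
      (∀ i, e i ∈ P) → (∀ j, f j ∈ Q) → x ∈ P ∨ y ∈ Q := by
  refine forall₄_congr fun P Q _ _ => forall_congr' fun _ => ?_
  simp only [← not_forall]
  tauto

namespace DPR

variable {x y γ δ : R} {e : ι → R} {f : κ → R} {i : ι} {k : κ}

theorem mul_restrict {j : ι} {l : κ} (hji : j ≠ i) (hlk : l ≠ k)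
    (he : e j ∣ e i * γ) (hf : f l ∣ f k * δ) (h : DPR x e y f) :
    DPR (x * γ) (fun t : {t // t ≠ i} => e t) (y * δ) (fun t : {t // t ≠ k} => f t) := by
  rw [dpr_iff] at h ⊢
  intro P Q hP hQ hPQ heP hfQ
  by_cases hγ : γ ∈ P
  · exact .inl (P.mul_mem_left x hγ)
  by_cases hδ : δ ∈ Q
  · exact .inr (Q.mul_mem_left y hδ)
  refine (h P Q hP hQ hPQ ?_ ?_).imp (P.mul_mem_right γ) (Q.mul_mem_right δ)
  · exact hP.forall_mem_of_forall_ne_mem hji he hγ heP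
  · exact hQ.forall_mem_of_forall_ne_mem hlk hf hδ hfQ

theorem mem_or_mem_of_mul_restrict
    (h : DPR (x * γ) (fun t : {t // t ≠ i} => e t) (y * δ) (fun t : {t // t ≠ k} => f t))
    {P Q : Ideal R} (hP : P.IsPrime) (hQ : Q.IsPrime) (hPQ : P ⊔ Q ≠ ⊤)
    (hγ : γ ∉ P) (hδ : δ ∉ Q) (he : ∀ t, e t ∈ P) (hf : ∀ t, f t ∈ Q) : x ∈ P ∨ y ∈ Q :=
  (dpr_iff.mp h P Q hP hQ hPQ (fun t => he t) (fun t => hf t)).imp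
    (fun hx => (hP.mem_or_mem hx).resolve_right hγ) (fun hy => (hQ.mem_or_mem hy).resolve_right hδ)

end DPR

end

/-- The inductive step in the proof that `DPR(R)` recursive implies `DPR_n(R)`
recursive: with `α, β, r₁, r₂, s₁, s₂` as given,
`(a, b₁,…,bₙ, c, d₁,…,dₙ) ∈ DPRₙ(R)` iff the four displayed membership
conditions in `DPR_{n-1}(R)` hold. -/
theorem stmt10 {R : Type*} [CommRing R] (n : ℕ) (hn : 2 ≤ n)
    (a c α β r₁ r₂ s₁ s₂ : R) (b d : Fin n → R)
    (hb1 : b ⟨0, by omega⟩ * α = b ⟨1, by omega⟩ * r₂)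
    (hb2 : b ⟨1, by omega⟩ * (α - 1) = b ⟨0, by omega⟩ * r₁)
    (hd1 : d ⟨0, by omega⟩ * β = d ⟨1, by omega⟩ * s₂)
    (hd2 : d ⟨1, by omega⟩ * (β - 1) = d ⟨0, by omega⟩ * s₁) :
    DPR a b c d ↔
      (DPR (a * α) (fun i : {i : Fin n // i ≠ ⟨0, by omega⟩} => b i.1)
          (c * β) (fun j : {j : Fin n // j ≠ ⟨0, by omega⟩} => d j.1) ∧
       DPR (a * α) (fun i : {i : Fin n // i ≠ ⟨0, by omega⟩} => b i.1)
          (c * (β - 1)) (fun j : {j : Fin n // j ≠ ⟨1, by omega⟩} => d j.1) ∧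
       DPR (a * (α - 1)) (fun i : {i : Fin n // i ≠ ⟨1, by omega⟩} => b i.1)
          (c * β) (fun j : {j : Fin n // j ≠ ⟨0, by omega⟩} => d j.1) ∧
       DPR (a * (α - 1)) (fun i : {i : Fin n // i ≠ ⟨1, by omega⟩} => b i.1)
          (c * (β - 1)) (fun j : {j : Fin n // j ≠ ⟨1, by omega⟩} => d j.1)) := by
  have h10 : (⟨1, by omega⟩ : Fin n) ≠ ⟨0, by omega⟩ := by simp [Fin.ext_iff]
  have h01 : (⟨0, by omega⟩ : Fin n) ≠ ⟨1, by omega⟩ := h10.symm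
  constructor
  · intro h
    exact ⟨h.mul_restrict h10 h10 ⟨r₂, hb1⟩ ⟨s₂, hd1⟩, h.mul_restrict h10 h01 ⟨r₂, hb1⟩ ⟨s₁, hd2⟩,
      h.mul_restrict h01 h10 ⟨r₁, hb2⟩ ⟨s₂, hd1⟩, h.mul_restrict h01 h01 ⟨r₁, hb2⟩ ⟨s₁, hd2⟩⟩
  · rintro ⟨h₁, h₂, h₃, h₄⟩
    refine dpr_iff.mpr fun P Q hP hQ hPQ hbP hdQ => ?_
    rcases hP.notMem_or_sub_one_notMem α with hα | hα <;>
      rcases hQ.notMem_or_sub_one_notMem β with hβ | hβ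
    · exact h₁.mem_or_mem_of_mul_restrict hP hQ hPQ hα hβ hbP hdQ
    · exact h₂.mem_or_mem_of_mul_restrict hP hQ hPQ hα hβ hbP hdQ
    · exact h₃.mem_or_mem_of_mul_restrict hP hQ hPQ hα hβ hbP hdQ
    · exact h₄.mem_or_mem_of_mul_restrict hP hQ hPQ hα hβ hbP hdQ
end

section
/- Let R be a commutative ring, a, b ∈ R and M an R-module. Then: (1) the cardinality of the quotient aM/abM equals the cardinality of M/({m ∈ M : a·m = 0} + bM); and (2) the cardinality of {m ∈ M : (ab)·m = 0}/{m ∈ M : a·m = 0} equals the cardinality of aM ∩ {m ∈ M : b·m = 0}. -/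
/-!
Both identities are instances of the isomorphism theorems for a composite `f ∘ g` of linear
maps, applied to `f = a •` and `g = b •` (resp. `g = a •` and `f = b •`). Since `f` maps `M`
onto `range f` with kernel `ker f` and sends `range g` onto `range (f ∘ g)`, we get
`range f / range (f ∘ g) ≃ M / (ker f + range g)`. Since `g` restricted to `ker (f ∘ g)` has
kernel `ker g` and image `g(g⁻¹(ker f)) = range g ∩ ker f`, we get
`ker (f ∘ g) / ker g ≃ range g ∩ ker f`.
-/

namespace LinearMap

variable {R M N P : Type*} [Ring R] [AddCommGroup M] [AddCommGroup N] [AddCommGroup P]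
  [Module R M] [Module R N] [Module R P]

theorem ker_mkQ_comp_rangeRestrict (f : M →ₗ[R] N) (g : P →ₗ[R] M) :
    ker (((range (f ∘ₗ g)).comap (range f).subtype).mkQ ∘ₗ f.rangeRestrict) = ker f ⊔ range g := by
  rw [ker_comp, Submodule.ker_mkQ, ← Submodule.comap_comp, rangeRestrict,
    subtype_comp_codRestrict, range_comp, Submodule.comap_map_eq, sup_comm]

noncomputable def quotKerSupRangeEquiv (f : M →ₗ[R] N) (g : P →ₗ[R] M) :
    (M ⧸ (ker f ⊔ range g)) ≃ₗ[R] range f ⧸ (range (f ∘ₗ g)).comap (range f).subtype :=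
  ((Submodule.quotEquivOfEq _ _ (ker_mkQ_comp_rangeRestrict f g).symm).trans
    (quotKerEquivOfSurjective _
      ((Submodule.mkQ_surjective _).comp (surjective_rangeRestrict f))))

theorem range_domRestrict_ker_comp (f : N →ₗ[R] P) (g : M →ₗ[R] N) :
    range (g.domRestrict (ker (f ∘ₗ g))) = range g ⊓ ker f := by
  rw [range_domRestrict, ker_comp, Submodule.map_comap_eq]

noncomputable def kerCompQuotKerEquiv (f : N →ₗ[R] P) (g : M →ₗ[R] N) :
    (ker (f ∘ₗ g) ⧸ (ker g).comap (ker (f ∘ₗ g)).subtype) ≃ₗ[R] ↥(range g ⊓ ker f) :=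
  ((Submodule.quotEquivOfEq _ _ (ker_domRestrict _ g)).symm.trans
    (quotKerEquivRange _)).trans (LinearEquiv.ofEq _ _ (range_domRestrict_ker_comp f g))

theorem lsmul_mul_eq_comp {S A : Type*} [CommSemiring S] [AddCommMonoid A] [Module S A]
    (a b : S) : lsmul S A (a * b) = lsmul S A a ∘ₗ lsmul S A b := by
  ext
  exact mul_smul a b _

end LinearMap

open LinearMap in
/-- For a commutative ring `R`, `a, b ∈ R` and an `R`-module `M`:
(1) `|aM/abM| = |M/(ker a + bM)|`, and
(2) `|ker(ab)/ker(a)| = |aM ∩ ker(b)|`. -/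
theorem stmt11 (R : Type*) [CommRing R] (M : Type*) [AddCommGroup M]
    [Module R M] (a b : R) :
    Cardinal.mk
        (↥(LinearMap.range (LinearMap.lsmul R M a)) ⧸
          Submodule.comap (LinearMap.range (LinearMap.lsmul R M a)).subtype
            (LinearMap.range (LinearMap.lsmul R M (a * b)))) =
      Cardinal.mk
        (M ⧸ (LinearMap.ker (LinearMap.lsmul R M a) ⊔
          LinearMap.range (LinearMap.lsmul R M b))) ∧
    Cardinal.mk
        (↥(LinearMap.ker (LinearMap.lsmul R M (a * b))) ⧸
          Submodule.comap (LinearMap.ker (LinearMap.lsmul R M (a * b))).subtype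
            (LinearMap.ker (LinearMap.lsmul R M a))) =
      Cardinal.mk
        ↥(LinearMap.range (LinearMap.lsmul R M a) ⊓
          LinearMap.ker (LinearMap.lsmul R M b)) := by
  constructor
  · rw [lsmul_mul_eq_comp]
    exact Cardinal.mk_congr (quotKerSupRangeEquiv _ _).toEquiv.symm
  · rw [mul_comm, lsmul_mul_eq_comp]
    exact Cardinal.mk_congr (kerCompQuotKerEquiv _ _).toEquiv
end

section
/- Let V be a valuation domain, d ∈ V, and U a uniserial V-module such that the submodule dU is finite and nonzero. Then there exists an ideal I of V such that U is isomorphic as a V-module to V/dI, and dU is isomorphic as a V-module to V/I. Here dI denotes the product of the principal ideal (d) with I. -/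
/-!
Since `dU` is finite it is a finitely generated submodule of a uniserial module, hence cyclic,
say `dU = V ∙ d • u`. Uniseriality forces `ker (d • ·) ≤ V ∙ u` (the other inclusion would give
`d • u = 0`), so `U = V ∙ u ≅ V / ann u`, while `dU ≅ V / ann (d • u)`; take `I = ann (d • u)`.
Finally, for `j ∈ ann u`, either `d ∣ j`, or `j ∣ d` and then `d • u = 0`; hence
`ann u = (d) · ann (d • u)`.
-/

open Submodule LinearMap Ideal

section Uniserial

variable {R M : Type*}

theorem Submodule.isPrincipal_of_fg_of_total [Semiring R] [AddCommMonoid M] [Module R M]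
    (htot : ∀ N₁ N₂ : Submodule R M, N₁ ≤ N₂ ∨ N₂ ≤ N₁) {N : Submodule R M} (hN : N.FG) :
    N.IsPrincipal := by
  classical
  obtain ⟨S, rfl⟩ := hN
  induction S using Finset.induction_on with
  | empty => exact ⟨⟨0, by simp⟩⟩
  | insert a S _ ih =>
    obtain ⟨⟨x, hx⟩⟩ := ih
    rw [Finset.coe_insert, span_insert, hx]
    rcases htot (R ∙ a) (R ∙ x) with h | h
    · exact ⟨⟨x, sup_eq_right.mpr h⟩⟩
    · exact ⟨⟨a, sup_eq_left.mpr h⟩⟩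

theorem Submodule.span_singleton_eq_top_of_range_lsmul_le [CommSemiring R] [AddCommGroup M]
    [Module R M] (htot : ∀ N₁ N₂ : Submodule R M, N₁ ≤ N₂ ∨ N₂ ≤ N₁) {d : R} {x : M}
    (hx : d • x ≠ 0) (hrange : range (lsmul R M d) ≤ R ∙ (d • x)) : R ∙ x = ⊤ := by
  have hker : ker (lsmul R M d) ≤ R ∙ x :=
    (htot _ _).resolve_right fun h => hx (h (mem_span_singleton_self x))
  refine eq_top_iff.mpr fun u _ => ?_
  obtain ⟨c, hc⟩ := mem_span_singleton.mp (hrange ⟨u, rfl⟩)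
  have hdiff : u - c • x ∈ ker (lsmul R M d) := by
    simp [smul_sub, smul_comm d c, hc]
  simpa using add_mem (hker hdiff) (smul_mem _ c (mem_span_singleton_self x))

end Uniserial

theorem Ideal.span_singleton_mul_torsionOf_smul {R M : Type*} [CommSemiring R]
    [PreValuationRing R] [AddCommMonoid M] [Module R M] {d : R} {x : M} (hx : d • x ≠ 0) :
    Ideal.span {d} * torsionOf R M (d • x) = torsionOf R M x := by
  ext a
  rw [Ideal.mem_span_singleton_mul, mem_torsionOf_iff]
  constructor
  · rintro ⟨c, hc, rfl⟩
    rwa [mem_torsionOf_iff, smul_smul, mul_comm] at hc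
  · intro ha
    obtain ⟨c, rfl⟩ | ⟨c, rfl⟩ := ValuationRing.dvd_total d a
    · exact ⟨c, by rwa [mem_torsionOf_iff, smul_smul, mul_comm], rfl⟩
    · exact absurd (by rw [mul_comm, mul_smul, ha, smul_zero]) hx

/-- If `U` is a uniserial module over a valuation domain `V`, `d ∈ V`, and the
submodule `dU` is finite and nonzero, then `U ≅ V/dI` and `dU ≅ V/I` for some
ideal `I` of `V`. -/
theorem stmt12 (V : Type*) [CommRing V] [IsDomain V] [ValuationRing V]
    (U : Type*) [AddCommGroup U] [Module V U]
    (huni : ∀ N₁ N₂ : Submodule V U, N₁ ≤ N₂ ∨ N₂ ≤ N₁) (d : V)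
    (hfin : Finite ↥(LinearMap.range (LinearMap.lsmul V U d)))
    (hne : LinearMap.range (LinearMap.lsmul V U d) ≠ ⊥) :
    ∃ I : Ideal V,
      Nonempty (U ≃ₗ[V] V ⧸ (Ideal.span {d} * I)) ∧
      Nonempty (↥(LinearMap.range (LinearMap.lsmul V U d)) ≃ₗ[V] V ⧸ I) := by
  have hdU : (range (lsmul V U d)).IsPrincipal :=
    isPrincipal_of_fg_of_total huni (Module.Finite.iff_fg.mp inferInstance)
  obtain ⟨⟨w, hw⟩⟩ := hdU
  obtain ⟨u, hu⟩ : w ∈ range (lsmul V U d) := hw ▸ mem_span_singleton_self w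
  obtain rfl : d • u = w := hu
  have hdu : d • u ≠ 0 := fun h => hne (by rw [hw, h, span_zero_singleton])
  have hU := span_singleton_eq_top_of_range_lsmul_le huni hdu hw.le
  refine ⟨torsionOf V U (d • u), ⟨?_⟩, ⟨?_⟩⟩
  · exact (LinearEquiv.ofTop _ hU).symm ≪≫ₗ (quotTorsionOfEquivSpanSingleton V U u).symm ≪≫ₗ
      quotEquivOfEq _ _ (span_singleton_mul_torsionOf_smul hdu).symm
  · exact LinearEquiv.ofEq _ _ hw ≪≫ₗ (quotTorsionOfEquivSpanSingleton V U (d • u)).symm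
end

section
/- Let V be a valuation domain, I a nonzero ideal of V, and b, c ∈ I both nonzero. Consider the V-module M = I/bcV (note that bc ∈ I, so the principal ideal bcV is contained in I). Then c·M is contained in the b-torsion submodule {m ∈ M : b·m = 0}, and the quotient module {m ∈ M : b·m = 0}/cM is isomorphic as a V-module to V/I. -/
/-!
The map `v ↦ [v c]` from `V` to `M = I/bcV` has image exactly the `b`-torsion of `M`, because
in a domain `b y ∈ bcV` forces `y ∈ cV`. The class `[v c]` lies in `cM` iff `c v ≡ c y (mod bcV)`
for some `y ∈ I`, i.e. iff `v ∈ I + bV = I`. So this map induces `V/I ≅ {m : b m = 0}/cM`.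
-/

/-- The `V`-module `I/bcV`: the quotient of the ideal `I` (as a `V`-module)
by the principal ideal `bcV ⊆ I`. -/
abbrev IdealQuot (V : Type*) [CommRing V] (I : Ideal V) (x : V) : Type _ :=
  ↥I ⧸ Submodule.comap I.subtype (Ideal.span {x} : Ideal V)

open Submodule LinearMap

noncomputable def LinearMap.quotComapEquivOfRangeEq {R M N : Type*} [CommRing R]
    [AddCommGroup M] [Module R M] [AddCommGroup N] [Module R N] (φ : M →ₗ[R] N)
    {K : Submodule R N} (hK : range φ = K) (L : Submodule R N) :
    (M ⧸ L.comap φ) ≃ₗ[R] K ⧸ L.comap K.subtype :=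
  let f : M →ₗ[R] K := φ.codRestrict K fun m ↦ hK ▸ mem_range_self φ m
  have hf : Function.Surjective f := fun ⟨n, hn⟩ ↦ by
    obtain ⟨m, rfl⟩ := mem_range.mp (hK ▸ hn)
    exact ⟨m, rfl⟩
  (quotEquivOfEq _ _ (by rw [ker_comp, ker_mkQ]; rfl)).trans
    (((L.comap K.subtype).mkQ.comp f).quotKerEquivOfSurjective ((mkQ_surjective _).comp hf))

namespace IdealQuot

variable {V : Type*} [CommRing V] {I : Ideal V}

theorem mk_eq_zero_iff {x : V} (y : I) :
    (Submodule.Quotient.mk y : IdealQuot V I x) = 0 ↔ x ∣ (y : V) := by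
  rw [Submodule.Quotient.mk_eq_zero, mem_comap, Submodule.coe_subtype,
    Ideal.mem_span_singleton]

theorem smul_eq_zero (x : V) (m : IdealQuot V I x) : x • m = 0 := by
  obtain ⟨y, rfl⟩ := Submodule.Quotient.mk_surjective _ m
  rw [← Submodule.Quotient.mk_smul, mk_eq_zero_iff]
  exact dvd_mul_right x y

theorem range_lsmul_le_ker_lsmul (b c : V) :
    range (lsmul V (IdealQuot V I (b * c)) c) ≤ ker (lsmul V (IdealQuot V I (b * c)) b) := by
  rintro _ ⟨m, rfl⟩
  rw [mem_ker, lsmul_apply, lsmul_apply, smul_smul]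
  exact smul_eq_zero _ m

def toSpanSingleton (x : V) {c : V} (hc : c ∈ I) : V →ₗ[V] IdealQuot V I x :=
  (mkQ _).comp (LinearMap.toSpanSingleton V I ⟨c, hc⟩)

theorem toSpanSingleton_apply (x : V) {c : V} (hc : c ∈ I) (v : V) :
    toSpanSingleton x hc v = Submodule.Quotient.mk ⟨v * c, I.mul_mem_left v hc⟩ :=
  rfl

variable [IsDomain V] {b c : V}

theorem range_toSpanSingleton (hb : b ≠ 0) (hc : c ∈ I) :
    range (toSpanSingleton (b * c) hc) = ker (lsmul V (IdealQuot V I (b * c)) b) := by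
  apply le_antisymm
  · rintro _ ⟨v, rfl⟩
    rw [mem_ker, lsmul_apply, toSpanSingleton_apply, ← Submodule.Quotient.mk_smul,
      mk_eq_zero_iff]
    exact ⟨v, by simp only [SetLike.val_smul, smul_eq_mul]; ring⟩
  · intro m hm
    obtain ⟨y, rfl⟩ := Submodule.Quotient.mk_surjective _ m
    rw [mem_ker, lsmul_apply, ← Submodule.Quotient.mk_smul, mk_eq_zero_iff,
      SetLike.val_smul, smul_eq_mul, mul_dvd_mul_iff_left hb] at hm
    obtain ⟨v, hv⟩ := hm
    exact ⟨v, by rw [toSpanSingleton_apply]; congr 2; rw [hv, mul_comm]⟩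

theorem comap_toSpanSingleton_range_lsmul (hc : c ≠ 0) (hbI : b ∈ I) (hcI : c ∈ I) :
    (range (lsmul V (IdealQuot V I (b * c)) c)).comap (toSpanSingleton (b * c) hcI) = I := by
  ext v
  constructor
  · rintro ⟨m, hm⟩
    obtain ⟨y, rfl⟩ := Submodule.Quotient.mk_surjective _ m
    rw [lsmul_apply, toSpanSingleton_apply, ← Submodule.Quotient.mk_smul, ← sub_eq_zero,
      ← Submodule.Quotient.mk_sub, mk_eq_zero_iff] at hm
    have hdiv : b ∣ (y : V) - v := by
      rw [← mul_dvd_mul_iff_right hc]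
      convert hm using 1
      simp only [Submodule.coe_sub, SetLike.val_smul, smul_eq_mul]
      ring
    simpa using I.sub_mem y.2 (Ideal.mem_of_dvd _ hdiv hbI)
  · intro hv
    refine ⟨Submodule.Quotient.mk ⟨v, hv⟩, ?_⟩
    rw [lsmul_apply, toSpanSingleton_apply, ← Submodule.Quotient.mk_smul]
    congr 2
    simp [mul_comm]

end IdealQuot

theorem stmt13_general (V : Type*) [CommRing V] [IsDomain V]
    (I : Ideal V) (b c : V) (hb : b ≠ 0) (hc : c ≠ 0)
    (hbI : b ∈ I) (hcI : c ∈ I) :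
    LinearMap.range (LinearMap.lsmul V (IdealQuot V I (b * c)) c) ≤
      LinearMap.ker (LinearMap.lsmul V (IdealQuot V I (b * c)) b) ∧
    Nonempty
      ((↥(LinearMap.ker (LinearMap.lsmul V (IdealQuot V I (b * c)) b)) ⧸
          Submodule.comap
            (LinearMap.ker (LinearMap.lsmul V (IdealQuot V I (b * c)) b)).subtype
            (LinearMap.range (LinearMap.lsmul V (IdealQuot V I (b * c)) c)))
        ≃ₗ[V] V ⧸ I) := by
  refine ⟨IdealQuot.range_lsmul_le_ker_lsmul b c, ⟨?_⟩⟩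
  have e := (IdealQuot.toSpanSingleton (b * c) hcI).quotComapEquivOfRangeEq
    (IdealQuot.range_toSpanSingleton hb hcI) (range (lsmul V (IdealQuot V I (b * c)) c))
  rw [IdealQuot.comap_toSpanSingleton_range_lsmul hc hbI hcI] at e
  exact e.symm

/-- For a nonzero ideal `I` of a valuation domain `V` and nonzero `b, c ∈ I`,
in the module `M = I/bcV` one has `cM ⊆ {m : b·m = 0}` and
`{m : b·m = 0}/cM ≅ V/I`. -/
theorem stmt13 (V : Type*) [CommRing V] [IsDomain V] [ValuationRing V]
    (I : Ideal V) (hI : I ≠ ⊥) (b c : V) (hb : b ≠ 0) (hc : c ≠ 0)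
    (hbI : b ∈ I) (hcI : c ∈ I) :
    LinearMap.range (LinearMap.lsmul V (IdealQuot V I (b * c)) c) ≤
      LinearMap.ker (LinearMap.lsmul V (IdealQuot V I (b * c)) b) ∧
    Nonempty
      ((↥(LinearMap.ker (LinearMap.lsmul V (IdealQuot V I (b * c)) b)) ⧸
          Submodule.comap
            (LinearMap.ker (LinearMap.lsmul V (IdealQuot V I (b * c)) b)).subtype
            (LinearMap.range (LinearMap.lsmul V (IdealQuot V I (b * c)) c)))
        ≃ₗ[V] V ⧸ I) :=
  stmt13_general V I b c hb hc hbI hcI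
end

section
/- Let V be a valuation domain, c ∈ V, and U a uniserial V-module such that the quotient U/cU is finite and nontrivial. Then there exists an ideal K of V with U isomorphic as a V-module to V/K, and moreover either c ∈ K (so that c annihilates U), or K = cI for some ideal I of V, in which case U/cU is isomorphic as a V-module to V/cV. -/
/-!
Since `U/cU` is finite, it is generated by finitely many elements, and as its submodules are
totally ordered it is generated by one of them; a lift `u` of that generator satisfies
`Vu + cU = U`. As `cU ≠ U`, total order forces `cU ≤ Vu`, so `U = Vu ≅ V/K` with `K` the
annihilator of `u`. If `c ∉ K`, then `K ⊆ (c)` because `V` is a valuation ring, so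
`K = (c)·(K : c)` and `U/cU ≅ V/(K + (c)) = V/(c)`.
-/

open LinearMap

namespace Submodule

section Ring

variable {R M : Type*} [Ring R] [AddCommGroup M] [Module R M]

theorem exists_eq_span_singleton_of_fg (htot : ∀ N₁ N₂ : Submodule R M, N₁ ≤ N₂ ∨ N₂ ≤ N₁)
    {N : Submodule R M} (hN : N.FG) : ∃ x, N = span R {x} := by
  classical
  obtain ⟨s, rfl⟩ := hN
  induction s using Finset.induction_on with
  | empty => exact ⟨0, by simp⟩
  | insert a s _ ih =>
    obtain ⟨x, hx⟩ := ih
    rw [Finset.coe_insert, span_insert, hx]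
    rcases htot (span R {a}) (span R {x}) with h | h
    · exact ⟨x, sup_eq_right.2 h⟩
    · exact ⟨a, sup_eq_left.2 h⟩

theorem le_total_quotient (htot : ∀ N₁ N₂ : Submodule R M, N₁ ≤ N₂ ∨ N₂ ≤ N₁)
    (N : Submodule R M) (P₁ P₂ : Submodule R (M ⧸ N)) : P₁ ≤ P₂ ∨ P₂ ≤ P₁ :=
  (htot (P₁.comap N.mkQ) (P₂.comap N.mkQ)).imp
    (comap_le_comap_iff_of_surjective N.mkQ_surjective).1
    (comap_le_comap_iff_of_surjective N.mkQ_surjective).1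

theorem exists_span_singleton_sup_eq_top
    (htot : ∀ N₁ N₂ : Submodule R M, N₁ ≤ N₂ ∨ N₂ ≤ N₁)
    (N : Submodule R M) [Module.Finite R (M ⧸ N)] : ∃ x, span R {x} ⊔ N = ⊤ := by
  obtain ⟨q, hq⟩ := exists_eq_span_singleton_of_fg (le_total_quotient htot N) Module.Finite.fg_top
  obtain ⟨x, rfl⟩ := N.mkQ_surjective q
  refine ⟨x, ?_⟩
  rw [sup_comm, ← comap_map_mkQ, map_span, Set.image_singleton, ← hq, comap_top]

theorem exists_span_singleton_eq_top (htot : ∀ N₁ N₂ : Submodule R M, N₁ ≤ N₂ ∨ N₂ ≤ N₁)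
    (N : Submodule R M) [Module.Finite R (M ⧸ N)] [Nontrivial (M ⧸ N)] :
    ∃ x : M, span R {x} = ⊤ := by
  obtain ⟨x, hx⟩ := exists_span_singleton_sup_eq_top htot N
  refine ⟨x, ?_⟩
  rcases htot (span R {x}) N with h | h
  · rw [sup_eq_right.2 h] at hx
    exact absurd hx (Quotient.nontrivial_iff.1 ‹_›)
  · rwa [sup_eq_left.2 h] at hx

end Ring

section CommRing

variable {R M : Type*} [CommRing R] [AddCommGroup M] [Module R M] {u : M}

theorem toSpanSingleton_surjective (hu : span R {u} = ⊤) :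
    Function.Surjective (toSpanSingleton R M u) :=
  range_eq_top.1 ((range_toSpanSingleton u).trans hu)

theorem range_lsmul_eq_map_span_singleton (hu : span R {u} = ⊤) (c : R) :
    range (lsmul R M c) = map (toSpanSingleton R M u) (Ideal.span {c}) := by
  rw [range_eq_map, ← hu, Ideal.span, map_span, map_span, Set.image_singleton,
    Set.image_singleton, lsmul_apply, toSpanSingleton_apply]

theorem ker_mkQ_range_lsmul_comp_toSpanSingleton (hu : span R {u} = ⊤) (c : R) :
    ker ((range (lsmul R M c)).mkQ ∘ₗ toSpanSingleton R M u) =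
      Ideal.span {c} ⊔ ker (toSpanSingleton R M u) := by
  rw [ker_comp, ker_mkQ, range_lsmul_eq_map_span_singleton hu, comap_map_eq]

noncomputable def quotientRangeLsmulEquiv (hu : span R {u} = ⊤) (c : R) :
    (M ⧸ range (lsmul R M c)) ≃ₗ[R] R ⧸ (Ideal.span {c} ⊔ ker (toSpanSingleton R M u)) :=
  (quotKerEquivOfSurjective ((range (lsmul R M c)).mkQ ∘ₗ toSpanSingleton R M u)
      ((mkQ_surjective _).comp (toSpanSingleton_surjective hu))).symm.trans
    (quotEquivOfEq _ _ (ker_mkQ_range_lsmul_comp_toSpanSingleton hu c))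

end CommRing

end Submodule

theorem Ideal.eq_span_singleton_mul_colon_of_le {R : Type*} [CommRing R] {K : Ideal R} {c : R}
    (h : K ≤ Ideal.span {c}) : K = Ideal.span {c} * K.colon (Ideal.span {c}) := by
  refine le_antisymm (fun k hk => ?_) (Ideal.mul_le.2 fun r hr s hs => ?_)
  · obtain ⟨d, rfl⟩ := Ideal.mem_span_singleton'.1 (h hk)
    rw [mul_comm d c]
    exact Ideal.mul_mem_mul (Ideal.mem_span_singleton_self c)
      (Ideal.mem_colon_span_singleton.2 hk)
  · obtain ⟨x, rfl⟩ := Ideal.mem_span_singleton'.1 hr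
    rw [mul_right_comm, mul_assoc]
    exact K.mul_mem_left x (Ideal.mem_colon_span_singleton.1 hs)

/-- If `U` is a uniserial module over a valuation domain `V`, `c ∈ V`, and
`U/cU` is finite and nontrivial, then `U ≅ V/K` for some ideal `K`, and either
`c ∈ K`, or `K = cI` for some ideal `I` and `U/cU ≅ V/cV`. -/
theorem stmt14 (V : Type*) [CommRing V] [IsDomain V] [ValuationRing V]
    (U : Type*) [AddCommGroup U] [Module V U]
    (huni : ∀ N₁ N₂ : Submodule V U, N₁ ≤ N₂ ∨ N₂ ≤ N₁) (c : V)
    (hfin : Finite (U ⧸ LinearMap.range (LinearMap.lsmul V U c)))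
    (hnt : Nontrivial (U ⧸ LinearMap.range (LinearMap.lsmul V U c))) :
    ∃ K : Ideal V, Nonempty (U ≃ₗ[V] V ⧸ K) ∧
      (c ∈ K ∨ ∃ I : Ideal V, K = Ideal.span {c} * I ∧
        Nonempty ((U ⧸ LinearMap.range (LinearMap.lsmul V U c)) ≃ₗ[V]
          V ⧸ (Ideal.span {c} : Ideal V))) := by
  obtain ⟨u, hu⟩ := Submodule.exists_span_singleton_eq_top huni (range (lsmul V U c))
  set K := ker (toSpanSingleton V U u)
  refine ⟨K, ⟨(quotKerEquivOfSurjective _ (Submodule.toSpanSingleton_surjective hu)).symm⟩,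
    or_iff_not_imp_left.2 fun hc => ?_⟩
  have hK : K ≤ Ideal.span {c} := (total_of (· ≤ ·) (Ideal.span {c}) K).resolve_left
    (by rwa [Ideal.span_singleton_le_iff_mem])
  exact ⟨K.colon (Ideal.span {c}), Ideal.eq_span_singleton_mul_colon_of_le hK,
    ⟨(Submodule.quotientRangeLsmulEquiv hu c).trans
      (Submodule.quotEquivOfEq _ _ (sup_eq_left.2 hK))⟩⟩
end

section
/- Let R be a commutative ring, M an R-module, c, d ∈ R and D ≥ 1 a natural number. Suppose that every m ∈ M with (c^{D−1}·d)·m = 0 lies in cM. Then, as cardinals, |dM| = |M/cM|^D · |(c^D·d)M|. -/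
/-! If `ker d ⊆ cM`, then `m ↦ d • m` induces `M ⧸ cM ≃ dM ⧸ cdM`, so `|dM| = |M/cM| · |cdM|`.
Apply this to `d, cd, …, c^(D-1)d`: each of their kernels lies in `ker (c^(D-1)d) ⊆ cM`. -/

open Cardinal LinearMap

section

variable {R M : Type*} [CommRing R] [AddCommGroup M] [Module R M]

theorem Submodule.mk_eq_mk_quotient_mul_mk (N : Submodule R M) : #M = #(M ⧸ N) * #N := by
  rw [mk_congr (AddSubgroup.addGroupEquivQuotientProdAddSubgroup (s := N.toAddSubgroup)),
    mk_prod, lift_id, lift_id]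
  rfl

theorem range_lsmul_mul_le_range_lsmul (c d : R) :
    range (lsmul R M (c * d)) ≤ range (lsmul R M d) := by
  rintro _ ⟨m, rfl⟩
  exact ⟨c • m, by simp only [lsmul_apply, smul_smul, mul_comm]⟩

theorem smul_mem_range_lsmul_mul_iff {c d : R}
    (h : ∀ m : M, d • m = 0 → m ∈ range (lsmul R M c)) (m : M) :
    d • m ∈ range (lsmul R M (c * d)) ↔ m ∈ range (lsmul R M c) := by
  constructor
  · rintro ⟨m', hm'⟩
    have hker : d • (m - c • m') = 0 := by
      rw [smul_sub, sub_eq_zero, ← hm', lsmul_apply, smul_smul, mul_comm]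
    obtain ⟨x, hx⟩ := h _ hker
    exact ⟨x + m', by rw [map_add, hx, lsmul_apply, sub_add_cancel]⟩
  · rintro ⟨m', rfl⟩
    exact ⟨m', by simp only [lsmul_apply, smul_smul, mul_comm]⟩

theorem mk_range_lsmul_eq_mk_quotient_mul {c d : R}
    (h : ∀ m : M, d • m = 0 → m ∈ range (lsmul R M c)) :
    #(range (lsmul R M d)) =
      #(M ⧸ range (lsmul R M c)) * #(range (lsmul R M (c * d))) := by
  set N := (range (lsmul R M (c * d))).comap (range (lsmul R M d)).subtype
  let f : M →ₗ[R] range (lsmul R M d) ⧸ N := N.mkQ ∘ₗ (lsmul R M d).rangeRestrict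
  have hf : Function.Surjective f :=
    (Submodule.mkQ_surjective N).comp (surjective_rangeRestrict _)
  have hker : ker f = range (lsmul R M c) := by
    ext m
    simpa [f, N] using smul_mem_range_lsmul_mul_iff h m
  rw [N.mk_eq_mk_quotient_mul_mk,
    mk_congr (Submodule.comapSubtypeEquivOfLe (range_lsmul_mul_le_range_lsmul c d)).toEquiv,
    ← hker, mk_congr (f.quotKerEquivOfSurjective hf).toEquiv]

theorem mk_range_lsmul_eq_pow_mul (c d : R) (D : ℕ)
    (h : ∀ k < D, ∀ m : M, (c ^ k * d) • m = 0 → m ∈ range (lsmul R M c)) :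
    #(range (lsmul R M d)) =
      #(M ⧸ range (lsmul R M c)) ^ D * #(range (lsmul R M (c ^ D * d))) := by
  induction D with
  | zero => simp
  | succ D ih =>
    rw [ih fun k hk => h k (by omega), mk_range_lsmul_eq_mk_quotient_mul (h D D.lt_succ_self),
      pow_succ, mul_assoc, ← mul_assoc c, ← pow_succ']

end

theorem stmt15_general (R : Type*) [CommRing R] (M : Type*) [AddCommGroup M]
    [Module R M] (c d : R) (D : ℕ)
    (h : ∀ m : M, (c ^ (D - 1) * d) • m = 0 →
      m ∈ LinearMap.range (LinearMap.lsmul R M c)) :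
    Cardinal.mk ↥(LinearMap.range (LinearMap.lsmul R M d)) =
      Cardinal.mk (M ⧸ LinearMap.range (LinearMap.lsmul R M c)) ^ D *
        Cardinal.mk ↥(LinearMap.range (LinearMap.lsmul R M (c ^ D * d))) := by
  refine mk_range_lsmul_eq_pow_mul c d D fun k hk m hm => h m ?_
  obtain ⟨j, hj⟩ : ∃ j, D - 1 = j + k := ⟨D - 1 - k, by omega⟩
  rw [hj, pow_add, mul_assoc, mul_smul, hm, smul_zero]

/-- If every `m` with `(c^(D-1)·d)·m = 0` lies in `cM`, then
`|dM| = |M/cM|^D · |(c^D·d)M|` as cardinals. -/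
theorem stmt15 (R : Type*) [CommRing R] (M : Type*) [AddCommGroup M]
    [Module R M] (c d : R) (D : ℕ) (hD : 1 ≤ D)
    (h : ∀ m : M, (c ^ (D - 1) * d) • m = 0 →
      m ∈ LinearMap.range (LinearMap.lsmul R M c)) :
    Cardinal.mk ↥(LinearMap.range (LinearMap.lsmul R M d)) =
      Cardinal.mk (M ⧸ LinearMap.range (LinearMap.lsmul R M c)) ^ D *
        Cardinal.mk ↥(LinearMap.range (LinearMap.lsmul R M (c ^ D * d))) :=
  stmt15_general R M c d D h
end

section
/- Let R be a commutative ring, M an R-module, c, d ∈ R and D ≥ 1 a natural number. If (c^D·d)·m = 0 for every m ∈ M, then, as cardinals, |dM| ≤ |M/cM|^D. -/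
/-!
Fix a set-theoretic section `s` of `M → M/cM`. Every `m : M` has a `c`-adic expansion
`m = ∑_{i<D} c^i • s(q_i) + c^D • u` with digits `q_i ∈ M/cM`. Multiplying by `d` kills the
remainder `c^D d • u`, so `d • m` is determined by its `D` digits: `dM` lies in the range of
a function on `(M/cM)^D`.
-/

section CAdicExpansion

variable {R M : Type*} [CommRing R] [AddCommGroup M] [Module R M] {c : R}
  {s : M ⧸ LinearMap.range (LinearMap.lsmul R M c) → M}

theorem exists_eq_section_mk_add_smul (hs : ∀ q, Submodule.Quotient.mk (s q) = q) (m : M) :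
    ∃ v : M, m = s (Submodule.Quotient.mk m) + c • v := by
  obtain ⟨v, hv⟩ := (Submodule.Quotient.eq _).mp (hs (Submodule.Quotient.mk m)).symm
  exact ⟨v, by simp only [LinearMap.lsmul_apply] at hv; rw [hv]; abel⟩

theorem exists_eq_sum_pow_smul_section_add_pow_smul
    (hs : ∀ q, Submodule.Quotient.mk (s q) = q) (n : ℕ) (m : M) :
    ∃ (q : Fin n → M ⧸ LinearMap.range (LinearMap.lsmul R M c)) (u : M),
      m = ∑ i : Fin _, c ^ (i : ℕ) • s (q i) + c ^ n • u := by
  induction n with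
  | zero => exact ⟨Fin.elim0, m, by simp⟩
  | succ n ih =>
    obtain ⟨q, u, hm⟩ := ih
    obtain ⟨v, hu⟩ := exists_eq_section_mk_add_smul hs u
    refine ⟨Fin.snoc q (Submodule.Quotient.mk u), v, ?_⟩
    rw [Fin.sum_univ_castSucc, hm]
    conv_lhs => rw [hu]
    simp only [Fin.snoc_castSucc, Fin.snoc_last, Fin.val_castSucc, Fin.val_last, smul_add,
      pow_succ, mul_smul, add_assoc]

end CAdicExpansion

theorem stmt16_general (R : Type*) [CommRing R] (M : Type*) [AddCommGroup M]
    [Module R M] (c d : R) (D : ℕ)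
    (h : ∀ m : M, (c ^ D * d) • m = 0) :
    Cardinal.mk ↥(LinearMap.range (LinearMap.lsmul R M d)) ≤
      Cardinal.mk (M ⧸ LinearMap.range (LinearMap.lsmul R M c)) ^ D := by
  set Q := M ⧸ LinearMap.range (LinearMap.lsmul R M c)
  let s : Q → M := Quotient.out
  have hs : ∀ q, Submodule.Quotient.mk (s q) = q := Quotient.out_eq
  have hrange : (LinearMap.range (LinearMap.lsmul R M d) : Set M) ⊆
      Set.range fun q : Fin D → Q => d • ∑ i : Fin _, c ^ (i : ℕ) • s (q i) := by
    rintro _ ⟨m, rfl⟩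
    obtain ⟨q, u, hm⟩ := exists_eq_sum_pow_smul_section_add_pow_smul hs D m
    refine ⟨q, ?_⟩
    rw [LinearMap.lsmul_apply, hm, smul_add, smul_smul d, mul_comm d, h, add_zero]
  calc Cardinal.mk ↥(LinearMap.range (LinearMap.lsmul R M d))
      ≤ Cardinal.mk (Fin D → Q) :=
        (Cardinal.mk_le_mk_of_subset hrange).trans Cardinal.mk_range_le
    _ = Cardinal.mk Q ^ D := by simp

/-- If `c^D·d` annihilates `M`, then `|dM| ≤ |M/cM|^D` as cardinals. -/
theorem stmt16 (R : Type*) [CommRing R] (M : Type*) [AddCommGroup M]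
    [Module R M] (c d : R) (D : ℕ) (hD : 1 ≤ D)
    (h : ∀ m : M, (c ^ D * d) • m = 0) :
    Cardinal.mk ↥(LinearMap.range (LinearMap.lsmul R M d)) ≤
      Cardinal.mk (M ⧸ LinearMap.range (LinearMap.lsmul R M c)) ^ D :=
  stmt16_general R M c d D h
end

section
/- Let V be a valuation domain, e ∈ V nonzero, and J a proper ideal of V such that (J : e) ⊆ eV + J. Then there exists an ideal I of V with J = e²I, where e²I denotes the product of the principal ideal (e²) with I. -/
/-!
If `e ∈ J` then `(J : e) = V`, so `eV + J = J` would be all of `V`; hence `e ∉ J` and, ideals of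
`V` being totally ordered, `J ⊆ eV`. Then `(J : e) ⊆ eV + J = eV`, so `J = e (J : e) ⊆ e²V`, and
any ideal inside a principal ideal `xV` equals `x (J : x)`.
-/

namespace Ideal

variable {R : Type*} [CommRing R] {e : R} {J : Ideal R}

theorem eq_span_singleton_mul_colon_of_le_s18 (hJ : J ≤ span {e}) :
    J = span {e} * J.colon (span {e}) := by
  refine (eq_span_singleton_mul J _).mpr ⟨fun x hx => ?_, fun r hr => ?_⟩
  · obtain ⟨r, rfl⟩ := mem_span_singleton.mp (hJ hx)
    exact ⟨r, mem_colon_span_singleton.mpr (by rwa [mul_comm]), rfl⟩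
  · simpa [mul_comm] using mem_colon_span_singleton.mp hr

theorem notMem_of_colon_le_span_singleton_sup (hJ : J ≠ ⊤)
    (h : J.colon (span {e}) ≤ span {e} ⊔ J) : e ∉ J := by
  intro heJ
  have hle : span {e} ≤ J := (span_singleton_le_iff_mem J).mpr heJ
  have hcolon : J.colon (span {e}) = ⊤ := (Submodule.colon_eq_top_iff_subset _).mpr hle
  exact hJ (eq_top_iff.mpr (hcolon ▸ h.trans (sup_le hle le_rfl)))

theorem le_span_singleton_sq_of_colon_le (hJ : J ≤ span {e})
    (h : J.colon (span {e}) ≤ span {e} ⊔ J) : J ≤ span {e ^ 2} := by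
  have hcolon : J.colon (span {e}) ≤ span {e} := h.trans (sup_le le_rfl hJ)
  calc J = span {e} * J.colon (span {e}) := eq_span_singleton_mul_colon_of_le_s18 hJ
    _ ≤ span {e} * span {e} := mul_mono_right hcolon
    _ = span {e ^ 2} := by rw [span_singleton_mul_span_singleton, sq]

end Ideal

theorem ValuationRing.le_span_singleton_of_notMem {R : Type*} [CommRing R] [IsDomain R]
    [ValuationRing R] {e : R} {J : Ideal R} (he : e ∉ J) : J ≤ Ideal.span {e} :=
  (Std.Total.total J (Ideal.span {e})).resolve_right
    fun hle => he ((Ideal.span_singleton_le_iff_mem J).mp hle)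

theorem stmt18_general (V : Type*) [CommRing V] [IsDomain V] [ValuationRing V]
    (e : V) (J : Ideal V) (hJ : J ≠ ⊤)
    (h : ∀ r : V, r * e ∈ J → r ∈ Ideal.span {e} ⊔ J) :
    ∃ I : Ideal V, J = Ideal.span {e ^ 2} * I := by
  have hcolon : J.colon (Ideal.span {e}) ≤ Ideal.span {e} ⊔ J :=
    fun r hr => h r (Ideal.mem_colon_span_singleton.mp hr)
  have hJe : J ≤ Ideal.span {e} := ValuationRing.le_span_singleton_of_notMem
    (Ideal.notMem_of_colon_le_span_singleton_sup hJ hcolon)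
  exact ⟨_, Ideal.eq_span_singleton_mul_colon_of_le_s18
    (Ideal.le_span_singleton_sq_of_colon_le hJe hcolon)⟩

/-- If `e ≠ 0` and `J` is a proper ideal of a valuation domain `V` with
`(J : e) ⊆ eV + J`, then `J = e²I` for some ideal `I`. -/
theorem stmt18 (V : Type*) [CommRing V] [IsDomain V] [ValuationRing V]
    (e : V) (he : e ≠ 0) (J : Ideal V) (hJ : J ≠ ⊤)
    (h : ∀ r : V, r * e ∈ J → r ∈ Ideal.span {e} ⊔ J) :
    ∃ I : Ideal V, J = Ideal.span {e ^ 2} * I :=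
  stmt18_general V e J hJ h
end
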